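/- Let (A,·,α) be a Hom-pre-Lie algebra and (V,β,ρ,μ) a representation with α and β invertible. Let Φ : Hom(∧^{n-1}A, Hom(A,V)) → Hom(∧^{n-1}A ⊗ A, V) be the canonical isomorphism Φ(ω)(x_1,…,x_{n-1},x_n) = ω(x_1,…,x_{n-1})(x_n). Then ∂ ∘ Φ = Φ ∘ d, where d is the Hom-Lie algebra coboundary operator of A^C with coefficients in the representation (Hom(A,V), Ad, ρ̂), Ad(f) = β∘f∘α^{-1}, ρ̂(x)(f)(y) = ρ(x)(f(α^{-1}(y))) + μ(y)(f(α^{-1}(x))) − Ad(f)(α^{-1}(x·y)), and ∂ : Hom(∧^{n-1}A ⊗ A, V) → Hom(∧^{n}A ⊗ A, V) is defined by (∂f)(x_1,…,x_{n+1}) = Σ_{i=1}^{n} (−1)^{i+1} ρ(x_i) f(α^{-1}(x_1),…,ω̂_i,…,α^{-1}(x_{n+1})) + Σ_{i=1}^{n} (−1)^{i+1} μ(x_{n+1}) f(α^{-1}(x_1),…,ω̂_i,…,α^{-1}(x_n), α^{-1}(x_i)) − Σ_{i=1}^{n} (−1)^{i+1} β f(α^{-1}(x_1),…,ω̂_i,…,α^{-1}(x_n),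 α^{-2}(x_i)·α^{-2}(x_{n+1})) + Σ_{1≤i<j≤n} (−1)^{i+j} β f([α^{-2}(x_i), α^{-2}(x_j)]_C, α^{-1}(x_1),…,ω̂_i,…,ω̂_j,…,α^{-1}(x_{n+1})), where ω̂_i means that the argument α^{-1}(x_i) is omitted. -/
import Mathlib


/-- A Hom-pre-Lie algebra structure on `A`: a bilinear product and an algebra
morphism `α` satisfying the Hom-pre-Lie identity. -/
def IsHomPreLie {K A : Type*} [Field K] [AddCommGroup A] [Module K A]
    (mul : A →ₗ[K] A →ₗ[K] A) (α : A →ₗ[K] A) : Prop :=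
  (∀ x y, α (mul x y) = mul (α x) (α y)) ∧
  (∀ x y z, mul (mul x y) (α z) - mul (α x) (mul y z)
      = mul (mul y x) (α z) - mul (α y) (mul x z))

/-- A representation of a Hom-Lie algebra `(L, bracket, α)` on `V` with respect to `β`. -/
def IsHomLieRep {K L V : Type*} [Field K] [AddCommGroup L] [Module K L]
    [AddCommGroup V] [Module K V]
    (bracket : L →ₗ[K] L →ₗ[K] L) (α : L →ₗ[K] L)
    (β : V →ₗ[K] V) (ρ : L →ₗ[K] Module.End K V) : Prop :=
  (∀ x, ρ (α x) ∘ₗ β = β ∘ₗ ρ x) ∧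
  (∀ x y, ρ (bracket x y) ∘ₗ β = ρ (α x) ∘ₗ ρ y - ρ (α y) ∘ₗ ρ x)

/-- A representation `(V, β, ρ, μ)` of a Hom-pre-Lie algebra `(A, mul, α)`:
`ρ` is a representation of the sub-adjacent Hom-Lie algebra (whose bracket is the
commutator `mul - mul.flip`) with respect to `β`, together with the two compatibility
conditions for `μ`. -/
def IsHomPreLieRep {K A V : Type*} [Field K] [AddCommGroup A] [Module K A]
    [AddCommGroup V] [Module K V]
    (mul : A →ₗ[K] A →ₗ[K] A) (α : A →ₗ[K] A)
    (β : V →ₗ[K] V) (ρ μ : A →ₗ[K] Module.End K V) : Prop :=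
  IsHomLieRep (mul - mul.flip) α β ρ ∧
  (∀ x, β ∘ₗ μ x = μ (α x) ∘ₗ β) ∧
  (∀ x y, μ (α y) ∘ₗ μ x - μ (mul x y) ∘ₗ β = μ (α y) ∘ₗ ρ x - ρ (α x) ∘ₗ μ y)

/-- `Ad(f) = β ∘ f ∘ α⁻¹` on `Hom(A,V)`. -/
def AdMap {K A V : Type*} [Field K] [AddCommGroup A] [Module K A]
    [AddCommGroup V] [Module K V]
    (α : A ≃ₗ[K] A) (β : V →ₗ[K] V) : Module.End K (A →ₗ[K] V) where
  toFun f := β ∘ₗ f ∘ₗ (α.symm : A →ₗ[K] A)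
  map_add' f g := by ext a; simp
  map_smul' c f := by ext a; simp

/-- `ρ̂ : A → gl(Hom(A,V))`, defined by
`ρ̂(x)(f)(y) = ρ(x)(f(α⁻¹ y)) + μ(y)(f(α⁻¹ x)) − β(f(α⁻¹(x·y)))`. -/
def hatRho {K A V : Type*} [Field K] [AddCommGroup A] [Module K A]
    [AddCommGroup V] [Module K V]
    (mul : A →ₗ[K] A →ₗ[K] A) (α : A ≃ₗ[K] A) (β : V →ₗ[K] V)
    (ρ μ : A →ₗ[K] Module.End K V) : A →ₗ[K] Module.End K (A →ₗ[K] V) where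
  toFun x :=
    { toFun := fun f =>
        ρ x ∘ₗ f ∘ₗ (α.symm : A →ₗ[K] A)
          + (μ : A →ₗ[K] V →ₗ[K] V).flip (f (α.symm x))
          - β ∘ₗ f ∘ₗ ((α.symm : A →ₗ[K] A) ∘ₗ (α.symm : A →ₗ[K] A) ∘ₗ mul x)
      map_add' := fun f g => by ext a; simp; abel
      map_smul' := fun c f => by ext a; simp [smul_sub] }
  map_add' x y := by
    ext f a
    simp [map_add]
    abel
  map_smul' c x := by
    ext f a
    simp [smul_sub]

/-- The `i<j` part of the Hom-Lie algebra coboundary operator, written on plain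
functions `(Fin k → A) → W`. -/
noncomputable def homLiePair {K A W : Type*} [Field K] [AddCommGroup A] [Module K A]
    [AddCommGroup W] [Module K W]
    (bracket : A →ₗ[K] A →ₗ[K] A) (α : A ≃ₗ[K] A) (γ : W →ₗ[K] W) :
    (k : ℕ) → ((Fin k → A) → W) → (Fin (k + 1) → A) → W
  | 0, _, _ => 0
  | (k + 1), ω, xs =>
    ∑ i : Fin (k + 2), ∑ j : Fin (k + 2),
      if h : (i : ℕ) < (j : ℕ) then
        ((-1 : ℤ) ^ ((i : ℕ) + (j : ℕ))) •
          γ (ω (Fin.cons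
              (bracket (α.symm (α.symm (xs i))) (α.symm (α.symm (xs j))))
              (fun l : Fin k => α.symm (xs (j.succAbove
                ((⟨(i : ℕ), lt_of_lt_of_le h (Nat.lt_succ_iff.mp j.isLt)⟩ :
                    Fin (k + 1)).succAbove l))))))
      else 0

/-- The coboundary operator of a Hom-Lie algebra `(A, bracket, α)` with coefficients
in a representation `(W, γ, σ)`, written on plain functions `(Fin k → A) → W`:
`(dω)(x₁,…,x_{k+1}) = Σᵢ (−1)^{i+1} σ(xᵢ)(ω(α⁻¹x₁,…,î,…,α⁻¹x_{k+1}))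
 + Σ_{i<j} (−1)^{i+j} γ(ω([α⁻²xᵢ,α⁻²xⱼ], α⁻¹x₁,…,î,…,ĵ,…,α⁻¹x_{k+1}))`. -/
noncomputable def homLieD {K A W : Type*} [Field K] [AddCommGroup A] [Module K A]
    [AddCommGroup W] [Module K W]
    (bracket : A →ₗ[K] A →ₗ[K] A) (α : A ≃ₗ[K] A)
    (σ : A →ₗ[K] Module.End K W) (γ : W →ₗ[K] W)
    (k : ℕ) (ω : (Fin k → A) → W) : (Fin (k + 1) → A) → W :=
  fun xs =>
    (∑ i : Fin (k + 1), (-1 : ℤ) ^ (i : ℕ) •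
        σ (xs i) (ω (fun l => α.symm (xs (i.succAbove l)))))
    + homLiePair bracket α γ k ω xs

/-- The `i<j` part of the Hom-pre-Lie coboundary operator. -/
noncomputable def preLiePair {K A V : Type*} [Field K] [AddCommGroup A] [Module K A]
    [AddCommGroup V] [Module K V]
    (mul : A →ₗ[K] A →ₗ[K] A) (α : A ≃ₗ[K] A) (β : V →ₗ[K] V) :
    (m : ℕ) → ((Fin m → A) → A → V) → (Fin (m + 1) → A) → A → V
  | 0, _, _, _ => 0
  | (m + 1), f, xs, z =>
    ∑ i : Fin (m + 2), ∑ j : Fin (m + 2),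
      if h : (i : ℕ) < (j : ℕ) then
        ((-1 : ℤ) ^ ((i : ℕ) + (j : ℕ))) •
          β (f (Fin.cons
              (mul (α.symm (α.symm (xs i))) (α.symm (α.symm (xs j)))
                - mul (α.symm (α.symm (xs j))) (α.symm (α.symm (xs i))))
              (fun l : Fin m => α.symm (xs (j.succAbove
                ((⟨(i : ℕ), lt_of_lt_of_le h (Nat.lt_succ_iff.mp j.isLt)⟩ :
                    Fin (m + 1)).succAbove l)))))
            (α.symm z))
      else 0

/-- The coboundary operator `∂ : C^{m+1}(A;V) → C^{m+2}(A;V)` of a Hom-pre-Lie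
algebra `(A, mul, α)` with coefficients in a representation `(V, β, ρ, μ)`, written
on plain functions: an element of `Hom(∧^m A ⊗ A, V)` is an `(m+1)`-ary map, given
as a function `(Fin m → A) → A → V` (the first `m` arguments are the alternating
ones, the last argument is the extra one):
`(∂f)(x₁,…,x_{m+2}) = Σᵢ (−1)^{i+1} ρ(xᵢ) f(α⁻¹x₁,…,î,…,α⁻¹x_{m+2})
 + Σᵢ (−1)^{i+1} μ(x_{m+2}) f(α⁻¹x₁,…,î,…,α⁻¹x_{m+1}, α⁻¹xᵢ)
 − Σᵢ (−1)^{i+1} β f(α⁻¹x₁,…,î,…,α⁻¹x_{m+1}, α⁻²xᵢ·α⁻²x_{m+2})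
 + Σ_{i<j} (−1)^{i+j} β f([α⁻²xᵢ,α⁻²xⱼ]_C, α⁻¹x₁,…,î,…,ĵ,…,α⁻¹x_{m+2})`. -/
noncomputable def preLieD {K A V : Type*} [Field K] [AddCommGroup A] [Module K A]
    [AddCommGroup V] [Module K V]
    (mul : A →ₗ[K] A →ₗ[K] A) (α : A ≃ₗ[K] A)
    (ρ μ : A →ₗ[K] Module.End K V) (β : V →ₗ[K] V)
    (m : ℕ) (f : (Fin m → A) → A → V) : (Fin (m + 1) → A) → A → V :=
  fun xs z =>
    (∑ i : Fin (m + 1), (-1 : ℤ) ^ (i : ℕ) •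
        ρ (xs i) (f (fun l => α.symm (xs (i.succAbove l))) (α.symm z)))
    + (∑ i : Fin (m + 1), (-1 : ℤ) ^ (i : ℕ) •
        μ z (f (fun l => α.symm (xs (i.succAbove l))) (α.symm (xs i))))
    - (∑ i : Fin (m + 1), (-1 : ℤ) ^ (i : ℕ) •
        β (f (fun l => α.symm (xs (i.succAbove l)))
            (mul (α.symm (α.symm (xs i))) (α.symm (α.symm z)))))
    + preLiePair mul α β m f xs z

/-- Let `(A,·,α)` be a Hom-pre-Lie algebra and `(V,β,ρ,μ)` a
representation with `α` and `β` invertible.  Let `Φ` be the canonical isomorphism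
`Hom(∧^m A, Hom(A,V)) → Hom(∧^m A ⊗ A, V)`, `Φ(ω)(x₁,…,x_m,x) = ω(x₁,…,x_m)(x)`.
Then `∂ ∘ Φ = Φ ∘ d`, where `d` is the Hom-Lie coboundary operator of `A^C` with
coefficients in `(Hom(A,V), Ad, ρ̂)`. -/
theorem preLieD_comp_Phi_eq_Phi_comp_homLieD
    {K A V : Type*} [Field K] [AddCommGroup A] [Module K A]
    [AddCommGroup V] [Module K V]
    (mul : A →ₗ[K] A →ₗ[K] A) (α : A ≃ₗ[K] A)
    (hA : IsHomPreLie mul (α : A →ₗ[K] A))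
    (β : V ≃ₗ[K] V) (ρ μ : A →ₗ[K] Module.End K V)
    (hrep : IsHomPreLieRep mul (α : A →ₗ[K] A) (β : V →ₗ[K] V) ρ μ)
    (m : ℕ) (ω : AlternatingMap K A (A →ₗ[K] V) (Fin m)) :
    ∀ (xs : Fin (m + 1) → A) (z : A),
      preLieD mul α ρ μ (β : V →ₗ[K] V) m (fun v x => ω v x) xs z
        = homLieD (mul - mul.flip) α (hatRho mul α (β : V →ₗ[K] V) ρ μ)
            (AdMap α (β : V →ₗ[K] V)) m (fun v => ω v) xs z := by
  intro xs z
  obtain ⟨hαmul, -⟩ := hA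
  have hsymm : ∀ a b : A, α.symm (mul a b) = mul (α.symm a) (α.symm b) := by
    intro a b
    apply α.injective
    have := hαmul (α.symm a) (α.symm b)
    simp only [LinearEquiv.coe_coe, LinearEquiv.apply_symm_apply] at this ⊢
    rw [this]
  have key : (∑ i : Fin (m + 1), (-1 : ℤ) ^ (i : ℕ) •
        ρ (xs i) (ω (fun l => α.symm (xs (i.succAbove l))) (α.symm z)))
    + (∑ i : Fin (m + 1), (-1 : ℤ) ^ (i : ℕ) •
        μ z (ω (fun l => α.symm (xs (i.succAbove l))) (α.symm (xs i))))
    - (∑ i : Fin (m + 1), (-1 : ℤ) ^ (i : ℕ) •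
        (β : V →ₗ[K] V) (ω (fun l => α.symm (xs (i.succAbove l)))
            (mul (α.symm (α.symm (xs i))) (α.symm (α.symm z)))))
    = (∑ i : Fin (m + 1), (-1 : ℤ) ^ (i : ℕ) •
        hatRho mul α (β : V →ₗ[K] V) ρ μ (xs i)
          (ω (fun l => α.symm (xs (i.succAbove l))))) z := by
    rw [LinearMap.sum_apply]
    rw [← Finset.sum_add_distrib, ← Finset.sum_sub_distrib]
    refine Finset.sum_congr rfl fun i _ => ?_
    simp only [hatRho, LinearMap.coe_mk, AddHom.coe_mk, LinearMap.smul_apply,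
      LinearMap.sub_apply, LinearMap.add_apply, LinearMap.coe_comp,
      Function.comp_apply, LinearEquiv.coe_coe, LinearMap.flip_apply,
      hsymm, smul_sub, smul_add]
  have pair : preLiePair mul α (β : V →ₗ[K] V) m (fun v x => ω v x) xs z
      = homLiePair (mul - mul.flip) α (AdMap α (β : V →ₗ[K] V)) m
          (fun v => ω v) xs z := by
    cases m with
    | zero => simp [preLiePair, homLiePair]
    | succ n =>
      simp only [preLiePair, homLiePair, LinearMap.sub_apply, LinearMap.flip_apply]
      rw [LinearMap.sum_apply]
      refine Finset.sum_congr rfl fun i _ => ?_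
      rw [LinearMap.sum_apply]
      refine Finset.sum_congr rfl fun j _ => ?_
      split_ifs with h
      · simp [AdMap]
      · rfl
  simp only [preLieD, homLieD, key, pair, LinearMap.add_apply]
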